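/- arXiv:1607.03064 — 7 statements merged into one kernel-verified Lean document; each statement's English description precedes it below -/
import Mathlib

section
/- Let c be a complex number with |c| ≥ 2, and define the sequence u by u₀ = 1, u₁ = 2c+1, u_{m+2} = (2c+2)u_{m+1} − u_m. Then for all m ≥ 0, (2|c|−3)^m ≤ |u_m| ≤ (2|c|+3)^m. -/
/-!
Write `b = 2c + 2`, so that `u (m+2) = b u (m+1) - u m` with `2|c| - 2 ≤ ‖b‖ ≤ 2|c| + 2`.
If `‖u (m+1)‖ ≥ λ ‖u m‖` for some `λ ≥ 1`, the reverse triangle inequality gives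
`‖u (m+2)‖ ≥ ‖b‖ ‖u (m+1)‖ - ‖u m‖ ≥ (‖b‖ - 1) ‖u (m+1)‖`, so the ratio bound with
`λ = 2|c| - 3` propagates; in particular `‖u m‖` is nondecreasing, and then the triangle
inequality gives `‖u (m+2)‖ ≤ (‖b‖ + 1) ‖u (m+1)‖ ≤ (2|c| + 3) ‖u (m+1)‖`. Both bounds hold
for `m = 0` since `‖u 1‖ = ‖2c + 1‖`, and iterating them gives the two geometric bounds.
-/

theorem mul_norm_le_norm_succ_of_recurrence {𝕜 : Type*} [NormedDivisionRing 𝕜] {b : 𝕜}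
    {u : ℕ → 𝕜} (hrec : ∀ n, u (n + 2) = b * u (n + 1) - u n) {l : ℝ} (hl : 1 ≤ l)
    (hb : l + 1 ≤ ‖b‖) (h01 : l * ‖u 0‖ ≤ ‖u 1‖) :
    ∀ n, l * ‖u n‖ ≤ ‖u (n + 1)‖ := by
  intro n
  induction n with
  | zero => exact h01
  | succ n ih =>
    have hmono : ‖u n‖ ≤ ‖u (n + 1)‖ := (le_mul_of_one_le_left (norm_nonneg _) hl).trans ih
    calc l * ‖u (n + 1)‖ ≤ ‖b‖ * ‖u (n + 1)‖ - ‖u n‖ := by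
          nlinarith [norm_nonneg (u (n + 1))]
      _ = ‖b * u (n + 1)‖ - ‖u n‖ := by rw [norm_mul]
      _ ≤ ‖u (n + 2)‖ := by rw [hrec]; exact norm_sub_norm_le _ _

theorem norm_succ_le_mul_norm_of_recurrence {R : Type*} [SeminormedRing R] {b : R}
    {u : ℕ → R} (hrec : ∀ n, u (n + 2) = b * u (n + 1) - u n)
    (hmono : ∀ n, ‖u n‖ ≤ ‖u (n + 1)‖) {L : ℝ} (hb : ‖b‖ + 1 ≤ L)
    (h01 : ‖u 1‖ ≤ L * ‖u 0‖) :
    ∀ n, ‖u (n + 1)‖ ≤ L * ‖u n‖ := by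
  rintro (_ | n)
  · exact h01
  · calc ‖u (n + 2)‖ ≤ ‖b‖ * ‖u (n + 1)‖ + ‖u n‖ := by
          rw [hrec]; exact (norm_sub_le _ _).trans (by gcongr; exact norm_mul_le _ _)
      _ ≤ L * ‖u (n + 1)‖ := by nlinarith [hmono n, norm_nonneg (u (n + 1))]

theorem abs_norm_two_mul_add_natCast_sub (c : ℂ) (k : ℕ) : |‖2 * c + k‖ - 2 * ‖c‖| ≤ k := by
  simpa [Complex.norm_two] using abs_norm_sub_norm_le (2 * c + k) (2 * c)

/-- For `c : ℂ` with `|c| ≥ 2` and the sequence `u₀ = 1`, `u₁ = 2c+1`,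
`u_{m+2} = (2c+2)u_{m+1} − u_m`, we have `(2|c|−3)^m ≤ |u_m| ≤ (2|c|+3)^m`. -/
theorem stmt_0 (c : ℂ) (hc : 2 ≤ ‖c‖) (u : ℕ → ℂ)
    (h0 : u 0 = 1) (h1 : u 1 = 2 * c + 1)
    (hrec : ∀ m, u (m + 2) = (2 * c + 2) * u (m + 1) - u m) :
    ∀ m : ℕ, (2 * ‖c‖ - 3) ^ m ≤ ‖u m‖ ∧
      ‖u m‖ ≤ (2 * ‖c‖ + 3) ^ m := by
  have hu1 : |‖u 1‖ - 2 * ‖c‖| ≤ 1 := by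
    simpa [h1] using abs_norm_two_mul_add_natCast_sub c 1
  have hb : |‖2 * c + 2‖ - 2 * ‖c‖| ≤ 2 := by
    simpa using abs_norm_two_mul_add_natCast_sub c 2
  rw [abs_le] at hu1 hb
  have hnorm0 : ‖u 0‖ = 1 := by simp [h0]
  have hlower := mul_norm_le_norm_succ_of_recurrence hrec (l := 2 * ‖c‖ - 3) (by linarith)
    (by linarith) (by rw [hnorm0]; linarith)
  have hmono n : ‖u n‖ ≤ ‖u (n + 1)‖ :=
    (le_mul_of_one_le_left (norm_nonneg _) (by linarith)).trans (hlower n)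
  have hupper := norm_succ_le_mul_norm_of_recurrence hrec hmono (L := 2 * ‖c‖ + 3)
    (by linarith) (by rw [hnorm0]; linarith)
  intro m
  constructor
  · simpa [hnorm0] using geom_le (u := (‖u ·‖)) (by linarith) m fun k _ => hlower k
  · simpa [hnorm0] using le_geom (u := (‖u ·‖)) (by linarith) m fun k _ => hupper k
end

section
/- Let c be a complex number with |c| ≥ 2, and define the sequence u by u₀ = 1, u₁ = 2c+1, u_{m+2} = (2c+2)u_{m+1} − u_m. Then the sequence of absolute values |u_m| is monotonically nondecreasing, and moreover |u_{m+1}| ≥ (2|c|−3)|u_m| for all m ≥ 0. -/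
/-!
With `a = 2c + 2` the recurrence reads `u (m + 2) = a u (m + 1) - u m`, and `‖a‖ ≥ 2‖c‖ - 2 = k + 1`
for `k = 2‖c‖ - 3 ≥ 1`. The growth bound `k ‖u m‖ ≤ ‖u (m + 1)‖` then propagates by induction:
it gives `‖u m‖ ≤ ‖u (m + 1)‖`, so `‖u (m + 2)‖ ≥ ‖a‖ ‖u (m + 1)‖ - ‖u m‖ ≥ k ‖u (m + 1)‖`.
Monotonicity follows from the growth bound since `k ≥ 1`.
-/

theorem norm_succ_ge_of_linear_recurrence {R : Type*} [NormedDivisionRing R] {a : R} {k : ℝ}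
    (hk : 1 ≤ k) (hka : k + 1 ≤ ‖a‖) {u : ℕ → R}
    (hrec : ∀ m, u (m + 2) = a * u (m + 1) - u m) (hbase : k * ‖u 0‖ ≤ ‖u 1‖) :
    ∀ m, k * ‖u m‖ ≤ ‖u (m + 1)‖ := by
  intro m
  induction m with
  | zero => exact hbase
  | succ n ih =>
    have hmono : ‖u n‖ ≤ ‖u (n + 1)‖ :=
      le_trans (le_mul_of_one_le_left (norm_nonneg _) hk) ih
    have hstep : ‖a‖ * ‖u (n + 1)‖ - ‖u n‖ ≤ ‖u (n + 2)‖ := by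
      rw [hrec n, ← norm_mul]
      exact norm_sub_norm_le _ _
    nlinarith [norm_nonneg (u (n + 1))]

theorem monotone_of_mul_le_succ {f : ℕ → ℝ} {k : ℝ} (hk : 1 ≤ k) (hf : ∀ m, 0 ≤ f m)
    (hgrowth : ∀ m, k * f m ≤ f (m + 1)) : Monotone f :=
  monotone_nat_of_le_succ fun m => le_trans (le_mul_of_one_le_left (hf m) hk) (hgrowth m)

theorem two_mul_norm_sub_le_norm_two_mul_add (c z : ℂ) : 2 * ‖c‖ - ‖z‖ ≤ ‖2 * c + z‖ := by
  simpa [norm_mul] using norm_sub_le_norm_add (2 * c) z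

/-- For `c : ℂ` with `|c| ≥ 2` and the sequence `u₀ = 1`, `u₁ = 2c+1`,
`u_{m+2} = (2c+2)u_{m+1} − u_m`, the sequence `|u_m|` is monotonically
nondecreasing and `|u_{m+1}| ≥ (2|c|−3)|u_m|` for all `m ≥ 0`. -/
theorem stmt_1 (c : ℂ) (hc : 2 ≤ ‖c‖) (u : ℕ → ℂ)
    (h0 : u 0 = 1) (h1 : u 1 = 2 * c + 1)
    (hrec : ∀ m, u (m + 2) = (2 * c + 2) * u (m + 1) - u m) :
    Monotone (fun m => ‖u m‖) ∧
      ∀ m : ℕ, (2 * ‖c‖ - 3) * ‖u m‖ ≤ ‖u (m + 1)‖ := by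
  have hk : 1 ≤ 2 * ‖c‖ - 3 := by linarith
  have hka : 2 * ‖c‖ - 3 + 1 ≤ ‖2 * c + 2‖ := by
    have := two_mul_norm_sub_le_norm_two_mul_add c 2
    norm_num at this
    linarith
  have hbase : (2 * ‖c‖ - 3) * ‖u 0‖ ≤ ‖u 1‖ := by
    have := two_mul_norm_sub_le_norm_two_mul_add c 1
    rw [h0, h1, norm_one, mul_one]
    norm_num at this
    linarith
  have hgrowth := norm_succ_ge_of_linear_recurrence hk hka hrec hbase
  exact ⟨monotone_of_mul_le_succ hk (fun m => norm_nonneg (u m)) hgrowth, hgrowth⟩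
end

section
/- Let R be a commutative ring, c ∈ R, ε ∈ R, and define u by u₀ = ε, u₁ = ε(2c+1), u_{m+2} = (2c+2)u_{m+1} − u_m. Then for every m ≥ 0 there exists t ∈ R such that u_m − ε(1 + T_m·c) = 4c²·t, i.e. u_m ≡ ε(1 + T_m·c) (mod 4c²), where T_m is the integer m(m+1) cast into R. -/
/-- In a commutative ring `R`, with `u₀ = ε`, `u₁ = ε(2c+1)`,
`u_{m+2} = (2c+2)u_{m+1} − u_m`, one has `u_m ≡ ε(1 + m(m+1)c) (mod 4c²)`. -/
theorem stmt_2 (R : Type*) [CommRing R] (c ε : R) (u : ℕ → R)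
    (h0 : u 0 = ε) (h1 : u 1 = ε * (2 * c + 1))
    (hrec : ∀ m, u (m + 2) = (2 * c + 2) * u (m + 1) - u m) :
    ∀ m : ℕ, (4 * c ^ 2) ∣ (u m - ε * (1 + (m * (m + 1) : ℕ) * c)) := by
  have key : ∀ m : ℕ, (4 * c ^ 2) ∣ (u m - ε * (1 + (m * (m + 1) : ℕ) * c)) ∧
      (4 * c ^ 2) ∣ (u (m + 1) - ε * (1 + ((m + 1) * (m + 2) : ℕ) * c)) := by
    intro m
    induction m with
    | zero =>
      constructor
      · refine ⟨0, ?_⟩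
        rw [h0]; push_cast; ring
      · refine ⟨0, ?_⟩
        rw [h1]; push_cast; ring
    | succ n ih =>
      refine ⟨ih.2, ?_⟩
      obtain ⟨a, ha⟩ := ih.1
      obtain ⟨b, hb⟩ := ih.2
      obtain ⟨k, hk⟩ := Nat.even_mul_succ_self (n + 1)
      have hkR : (((n + 1) * (n + 2) : ℕ) : R) = (k : R) + k := by exact_mod_cast congrArg (Nat.cast (R := R)) hk
      refine ⟨(2 * c + 2) * b - a + k * ε, ?_⟩
      rw [hrec]
      push_cast
      push_cast at ha hb hkR
      linear_combination (2 * c + 2) * hb - ha + 2 * c ^ 2 * ε * hkR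
  exact fun m => (key m).1
end

section
/- Let R be a commutative ring, c ∈ R, ε ∈ R, and define u' by u'₀ = ε, u'₁ = ε(2c−1), u'_{n+2} = (2c−2)u'_{n+1} − u'_n. Then for every n ≥ 0, u'_n ≡ (−1)^n·ε·(1 − n(n+1)·c) (mod 4c²), where n(n+1) denotes the integer n(n+1) cast into R. -/
section LinearRecurrence

variable {R : Type*} [CommRing R]

theorem dvd_sub_of_linearRecurrence {d a b : R} {u v : ℕ → R}
    (hu : ∀ n, u (n + 2) = a * u (n + 1) + b * u n)
    (hv : ∀ n, d ∣ v (n + 2) - (a * v (n + 1) + b * v n))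
    (h0 : d ∣ u 0 - v 0) (h1 : d ∣ u 1 - v 1) : ∀ n, d ∣ u n - v n := by
  refine Nat.twoStepInduction h0 h1 fun n hn hn1 => ?_
  have h : u (n + 2) - v (n + 2)
      = a * (u (n + 1) - v (n + 1)) + b * (u n - v n)
        - (v (n + 2) - (a * v (n + 1) + b * v n)) := by
    rw [hu]; ring
  rw [h]
  exact ((hn1.mul_left a).add (hn.mul_left b)).sub (hv n)

def approxSeq (c ε : R) (n : ℕ) : R := (-1) ^ n * ε * (1 - (n * (n + 1) : ℕ) * c)

/-- The defect is `-2 (n+1)(n+2) c² (-1)^n ε`, a multiple of `4c²` since `(n+1)(n+2)` is even. -/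
theorem four_mul_sq_dvd_approxSeq_recurrence (c ε : R) (n : ℕ) :
    4 * c ^ 2 ∣ approxSeq c ε (n + 2)
      - ((2 * c - 2) * approxSeq c ε (n + 1) + (-1) * approxSeq c ε n) := by
  obtain ⟨k, hk⟩ : Even ((n + 1) * (n + 2)) := Nat.even_mul_succ_self (n + 1)
  have hk' : ((n : R) + 1) * ((n : R) + 2) = k + k := by
    simpa using congrArg (Nat.cast (R := R)) hk
  refine ⟨-((-1) ^ n * ε * k), ?_⟩
  simp only [approxSeq]
  push_cast
  linear_combination (-2 * c ^ 2 * ε * (-1) ^ n) * hk'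

end LinearRecurrence

/-- In a commutative ring `R`, with `u'₀ = ε`, `u'₁ = ε(2c−1)`,
`u'_{n+2} = (2c−2)u'_{n+1} − u'_n`, one has
`u'_n ≡ (−1)^n ε (1 − n(n+1)c) (mod 4c²)`. -/
theorem stmt_3 (R : Type*) [CommRing R] (c ε : R) (u' : ℕ → R)
    (h0 : u' 0 = ε) (h1 : u' 1 = ε * (2 * c - 1))
    (hrec : ∀ n, u' (n + 2) = (2 * c - 2) * u' (n + 1) - u' n) :
    ∀ n : ℕ, (4 * c ^ 2) ∣ (u' n - (-1) ^ n * ε * (1 - (n * (n + 1) : ℕ) * c)) := by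
  refine dvd_sub_of_linearRecurrence (v := approxSeq c ε) (fun n => ?_)
    (four_mul_sq_dvd_approxSeq_recurrence c ε) ?_ ?_
  · rw [hrec]; ring
  · simp [approxSeq, h0]
  · simp only [approxSeq, h1]; push_cast; exact ⟨0, by ring⟩
end

section
/- Let R be the ring of integers of an imaginary quadratic field and c ∈ R with c ∉ {0, ±2}. If (u,v) ∈ R² satisfies (u + 2v)(u − 2(c+1)v)(u + 2(c−1)v) = ε for a unit ε of R, then v = 0 and u is a unit of R. -/
/-!
An imaginary quadratic field has a single infinite place `w`, and the product formula reads
`w x ^ 2 = |N x|`. Hence `w = 1` on units and `w ≥ 1` on nonzero integers. The second and third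
factors are units whose difference is `4cv`, so `4 w(cv) ≤ 2`, which forces `cv = 0`.
-/

open NumberField

namespace NumberField.InfinitePlace

variable {K : Type*} [Field K] [NumberField K]

theorem subsingleton_of_finrank_eq_two (hdeg : Module.finrank ℚ K = 2)
    (himag : IsEmpty (K →+* ℝ)) : Subsingleton (InfinitePlace K) := by
  have hreal : nrRealPlaces K = 0 :=
    nrRealPlaces_eq_zero_iff.mpr
      ⟨fun w => not_isReal_iff_isComplex.mp fun hw => himag.false (embedding_of_isReal hw)⟩
  have hrank := card_add_two_mul_card_eq_rank K
  rw [← Fintype.card_le_one_iff_subsingleton, card_eq_nrRealPlaces_add_nrComplexPlaces]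
  omega

variable [Subsingleton (InfinitePlace K)] (w : InfinitePlace K)

theorem apply_pow_mult_eq_abs_norm (x : K) : w x ^ mult w = (|Algebra.norm ℚ x| : ℚ) := by
  rw [← prod_eq_abs_norm, Fintype.prod_subsingleton _ w]

theorem apply_eq_one_of_isUnit {x : 𝓞 K} (hx : IsUnit x) : w x = 1 := by
  have hnorm : w x ^ mult w = 1 := by
    rw [apply_pow_mult_eq_abs_norm, ← RingOfIntegers.coe_norm]
    exact_mod_cast isUnit_iff_norm.mp hx
  exact (pow_eq_one_iff_of_nonneg (apply_nonneg w _) (mult_pos (w := w)).ne').mp hnorm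

theorem one_le_apply_of_ne_zero {x : 𝓞 K} (hx : x ≠ 0) : 1 ≤ w x := by
  have hnorm : (1 : ℝ) ≤ (|Algebra.norm ℚ (x : K)| : ℚ) := by
    rw [← Algebra.coe_norm_int]
    exact_mod_cast Int.one_le_abs (Algebra.norm_ne_zero_iff.mpr hx)
  rw [← apply_pow_mult_eq_abs_norm] at hnorm
  exact (one_le_pow_iff_of_nonneg (apply_nonneg w _) (mult_pos (w := w)).ne').mp hnorm

theorem eq_zero_of_isUnit_of_isUnit_add_natCast_mul {a x : 𝓞 K} {n : ℕ} (hn : 2 < n)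
    (ha : IsUnit a) (hb : IsUnit (a + n * x)) : x = 0 := by
  obtain ⟨w⟩ := (inferInstance : Nonempty (InfinitePlace K))
  by_contra hx
  have hle : w (n * x : K) ≤ 2 := calc
    w (n * x : K) = w (((a + n * x : 𝓞 K) : K) - a) := by push_cast; ring_nf
    _ ≤ w ((a + n * x : 𝓞 K) : K) + w (a : K) := AbsoluteValue.sub_le_add w.1 _ _
    _ = 2 := by rw [apply_eq_one_of_isUnit w ha, apply_eq_one_of_isUnit w hb]; norm_num
  have hge : (n : ℝ) ≤ w (n * x : K) := by
    rw [map_mul, w.map_natCast]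
    exact le_mul_of_one_le_right (Nat.cast_nonneg n) (one_le_apply_of_ne_zero w hx)
  have : n ≤ 2 := by exact_mod_cast hge.trans hle
  omega

end NumberField.InfinitePlace

theorem stmt_5_general (K : Type*) [Field K] [NumberField K]
    (hdeg : Module.finrank ℚ K = 2) (himag : IsEmpty (K →+* ℝ))
    (c : 𝓞 K) (hc0 : c ≠ 0)
    (u v : 𝓞 K) (ε : (𝓞 K)ˣ)
    (h : (u + 2 * v) * (u - 2 * (c + 1) * v) * (u + 2 * (c - 1) * v) = (ε : 𝓞 K)) :
    v = 0 ∧ IsUnit u := by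
  have := InfinitePlace.subsingleton_of_finrank_eq_two hdeg himag
  have hprod : IsUnit ((u + 2 * v) * (u - 2 * (c + 1) * v) * (u + 2 * (c - 1) * v)) :=
    h ▸ ε.isUnit
  have hb := isUnit_of_mul_isUnit_right (isUnit_of_mul_isUnit_left hprod)
  have hd : IsUnit ((u - 2 * (c + 1) * v) + (4 : ℕ) * (c * v)) := by
    convert isUnit_of_mul_isUnit_right hprod using 1
    push_cast
    ring
  have hcv := InfinitePlace.eq_zero_of_isUnit_of_isUnit_add_natCast_mul (by norm_num) hb hd
  have hv : v = 0 := (mul_eq_zero.mp hcv).resolve_left hc0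
  subst hv
  have hcube : IsUnit (u * u * u) := by simpa using hprod
  exact ⟨rfl, isUnit_of_mul_isUnit_left (isUnit_of_mul_isUnit_left hcube)⟩

/-- In the ring of integers of an imaginary quadratic field, if `c ∉ {0, ±2}` and
`(u + 2v)(u − 2(c+1)v)(u + 2(c−1)v)` is a unit `ε`, then `v = 0` and `u` is a unit. -/
theorem stmt_5 (K : Type*) [Field K] [NumberField K]
    (hdeg : Module.finrank ℚ K = 2) (himag : IsEmpty (K →+* ℝ))
    (c : 𝓞 K) (hc0 : c ≠ 0) (hc2 : c ≠ 2) (hc2' : c ≠ -2)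
    (u v : 𝓞 K) (ε : (𝓞 K)ˣ)
    (h : (u + 2 * v) * (u - 2 * (c + 1) * v) * (u + 2 * (c - 1) * v) = (ε : 𝓞 K)) :
    v = 0 ∧ IsUnit u :=
  stmt_5_general K hdeg himag c hc0 u v ε h
end

section
/- Let R be the ring of integers of an imaginary quadratic field and c ∈ R. If c² − 4 = r² for some r ∈ R, then c ∈ {0, 1, −1, 2, −2}. -/
/-!
Embed `𝓞 K` into `ℂ` by one of the two (conjugate) complex embeddings; then `normSq` and
`2 * re` take integer values on it (norm and trace). Put `z = c`, `w = r`. Since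
`(z - w)(z + w) = 4`, the norms `a = |z - w|²`, `b = |z + w|²` are nonnegative integers with
`ab = 16`, and by the parallelogram law `a + b = 2(|z|² + |w|²)`, so `|z|² + |w|² ∈ {4, 5}`.
Comparing `|z²|² = |w² + 4|²` then rules out `5` by parity and forces `Re w = 0` when the sum is
`4`. Then `Re (z²) = 4 - |w|² = |z|²`, so `z` is real, and an integer because `2z` and `z²` are;
finally `z² = |z|² ≤ 4`.
-/

open NumberField Complex Module InfinitePlace

theorem Int.eq_zero_and_add_eq_four_of_mul_eq_sixteen {a b m n t : ℤ} (ha : 0 ≤ a)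
    (hab : a * b = 16) (hsum : a + b = 2 * (m + n)) (hsq : m ^ 2 = n ^ 2 + 4 * t ^ 2 - 8 * n + 16) :
    t = 0 ∧ m + n = 4 := by
  have ha16 : a ≤ 16 := Int.le_of_dvd (by norm_num) ⟨b, hab.symm⟩
  have hmn : m + n = 4 ∨ m + n = 5 := by
    interval_cases a <;> omega
  rcases hmn with hmn | hmn
  · have ht : 4 * t ^ 2 = 0 := by linear_combination hmn * (m - n + 4) - hsq
    exact ⟨by simpa using ht, hmn⟩
  · have hodd : 9 = 4 * t ^ 2 + 2 * n := by linear_combination hsq - (m - n + 5) * hmn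
    omega

namespace Complex

theorem normSq_sub_add_normSq_add (z w : ℂ) :
    normSq (z - w) + normSq (z + w) = 2 * (normSq z + normSq w) := by
  simp only [normSq_apply, sub_re, sub_im, add_re, add_im]
  ring

theorem normSq_sub_mul_normSq_add_of_sq_sub_four_eq_sq {z w : ℂ} (h : z ^ 2 - 4 = w ^ 2) :
    normSq (z - w) * normSq (z + w) = 16 := by
  rw [← map_mul, show (z - w) * (z + w) = 4 by linear_combination h]
  norm_num [normSq_ofNat]

theorem normSq_sq_of_sq_sub_four_eq_sq {z w : ℂ} (h : z ^ 2 - 4 = w ^ 2) :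
    normSq z ^ 2 = normSq w ^ 2 + 4 * (2 * w.re) ^ 2 - 8 * normSq w + 16 := by
  have hre := congrArg re h
  have him := congrArg im h
  simp only [sub_re, sub_im, pow_two, mul_re, mul_im] at hre him
  norm_num at hre him
  simp only [normSq_apply]
  linear_combination (z.re * z.re - z.im * z.im + w.re * w.re - w.im * w.im + 4) * hre +
    2 * (z.re * z.im + w.re * w.im) * him

theorem im_eq_zero_of_sq_sub_four_eq_sq {z w : ℂ} (h : z ^ 2 - 4 = w ^ 2) (hw : w.re = 0)
    (hsum : normSq z + normSq w = 4) : z.im = 0 := by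
  have hre := congrArg re h
  simp only [sub_re, pow_two, mul_re, hw, re_ofNat] at hre
  rw [normSq_apply, normSq_apply, hw] at hsum
  nlinarith

end Complex

section IntegralNormSq

variable {R : Type*} [Ring R] {f : R →+* ℂ}

theorem exists_int_eq_two_mul_re (hf : ∀ x, ∃ n : ℤ, normSq (f x) = n) (x : R) :
    ∃ t : ℤ, 2 * (f x).re = t := by
  obtain ⟨n, hn⟩ := hf x
  obtain ⟨n₁, hn₁⟩ := hf (x + 1)
  refine ⟨n₁ - n - 1, ?_⟩
  rw [map_add, map_one, normSq_add] at hn₁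
  push_cast
  simp only [map_one, mul_one] at hn₁
  linarith

theorem re_eq_zero_and_normSq_add_eq_four (hf : ∀ x, ∃ n : ℤ, normSq (f x) = n) {c r : R}
    (h : c ^ 2 - 4 = r ^ 2) : (f r).re = 0 ∧ normSq (f c) + normSq (f r) = 4 := by
  have hfh : f c ^ 2 - 4 = f r ^ 2 := by
    rw [← map_ofNat f 4, ← map_pow, ← map_pow, ← map_sub, h]
  obtain ⟨a, ha⟩ := hf (c - r)
  obtain ⟨b, hb⟩ := hf (c + r)
  obtain ⟨m, hm⟩ := hf c
  obtain ⟨n, hn⟩ := hf r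
  obtain ⟨t, ht⟩ := exists_int_eq_two_mul_re hf r
  rw [map_sub] at ha
  rw [map_add] at hb
  have ha0 : (0 : ℝ) ≤ a := ha ▸ normSq_nonneg _
  have hab : (a : ℝ) * b = 16 := ha ▸ hb ▸ normSq_sub_mul_normSq_add_of_sq_sub_four_eq_sq hfh
  have hsum : (a : ℝ) + b = 2 * (m + n) := ha ▸ hb ▸ hm ▸ hn ▸ normSq_sub_add_normSq_add _ _
  have hsq : (m : ℝ) ^ 2 = n ^ 2 + 4 * t ^ 2 - 8 * n + 16 :=
    hm ▸ hn ▸ ht ▸ normSq_sq_of_sq_sub_four_eq_sq hfh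
  obtain ⟨ht0, hmn⟩ := Int.eq_zero_and_add_eq_four_of_mul_eq_sixteen (by exact_mod_cast ha0)
    (by exact_mod_cast hab) (by exact_mod_cast hsum) (by exact_mod_cast hsq)
  constructor
  · have : 2 * (f r).re = 0 := by rw [ht, ht0, Int.cast_zero]
    linarith
  · rw [hm, hn]
    exact_mod_cast hmn

theorem exists_int_eq_of_sq_sub_four_eq_sq (hf : ∀ x, ∃ n : ℤ, normSq (f x) = n) {c r : R}
    (h : c ^ 2 - 4 = r ^ 2) : ∃ m : ℤ, f c = m ∧ m ^ 2 ≤ 4 := by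
  obtain ⟨hre, hsum⟩ := re_eq_zero_and_normSq_add_eq_four hf h
  have hfh : f c ^ 2 - 4 = f r ^ 2 := by
    rw [← map_ofNat f 4, ← map_pow, ← map_pow, ← map_sub, h]
  have him := im_eq_zero_of_sq_sub_four_eq_sq hfh hre hsum
  obtain ⟨t, ht⟩ := exists_int_eq_two_mul_re hf c
  obtain ⟨n, hn⟩ := hf c
  have htn : t ^ 2 = 4 * n := by
    have : (t : ℝ) ^ 2 = 4 * n := by rw [← ht, ← hn, normSq_apply, him]; ring
    exact_mod_cast this
  obtain ⟨k, hk⟩ : Even t := (Int.even_pow.mp ⟨2 * n, by rw [htn]; ring⟩).1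
  refine ⟨k, Complex.ext ?_ (by simp [him]), ?_⟩
  · have : (2 : ℝ) * (f c).re = k + k := by rw [ht, hk]; push_cast; ring
    simp only [intCast_re]
    linarith
  · have hn4 : (n : ℝ) ≤ 4 := hn ▸ hsum ▸ le_add_of_nonneg_right (normSq_nonneg _)
    have : n ≤ 4 := by exact_mod_cast hn4
    have : 4 * k ^ 2 = 4 * n := by rw [← htn, hk]; ring
    linarith

end IntegralNormSq

namespace NumberField

variable {K : Type*} [Field K]

theorem isTotallyComplex_of_isEmpty_ringHom_real (h : IsEmpty (K →+* ℝ)) : IsTotallyComplex K :=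
  ⟨fun _ ↦ not_isReal_iff_isComplex.mp fun hw ↦ h.elim (embedding_of_isReal hw)⟩

variable [NumberField K]

theorem card_infinitePlace_eq_one_of_finrank_eq_two [IsTotallyComplex K] (h : finrank ℚ K = 2) :
    Fintype.card (InfinitePlace K) = 1 := by
  have := card_add_two_mul_card_eq_rank K
  rw [IsTotallyComplex.nrRealPlaces_eq_zero, h] at this
  rw [card_eq_nrRealPlaces_add_nrComplexPlaces, IsTotallyComplex.nrRealPlaces_eq_zero]
  omega

theorem exists_normSq_eq_abs_norm_of_finrank_eq_two [IsTotallyComplex K] (h : finrank ℚ K = 2) :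
    ∃ φ : K →+* ℂ, ∀ x : 𝓞 K, normSq (φ x) = |Algebra.norm ℤ x| := by
  obtain ⟨w, hw⟩ := Fintype.card_eq_one_iff.mp (card_infinitePlace_eq_one_of_finrank_eq_two h)
  refine ⟨w.embedding, fun x ↦ ?_⟩
  have := prod_eq_abs_norm (x : K)
  rw [Fintype.prod_eq_single w (fun v hv ↦ (hv (hw v)).elim), IsTotallyComplex.mult_eq,
    ← norm_embedding_eq, ← Algebra.coe_norm_int] at this
  rw [normSq_eq_norm_sq]
  exact_mod_cast this

end NumberField

/-- In the ring of integers of an imaginary quadratic field, if `c² − 4 = r²`,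
then `c ∈ {0, ±1, ±2}`. -/
theorem stmt_10 (K : Type*) [Field K] [NumberField K]
    (hdeg : Module.finrank ℚ K = 2) (himag : IsEmpty (K →+* ℝ))
    (c r : 𝓞 K) (h : c ^ 2 - 4 = r ^ 2) :
    c = 0 ∨ c = 1 ∨ c = -1 ∨ c = 2 ∨ c = -2 := by
  have := isTotallyComplex_of_isEmpty_ringHom_real himag
  obtain ⟨φ, hφ⟩ := exists_normSq_eq_abs_norm_of_finrank_eq_two hdeg
  obtain ⟨m, hm, hm4⟩ :=
    exists_int_eq_of_sq_sub_four_eq_sq (f := φ.comp (algebraMap (𝓞 K) K)) (fun x ↦ ⟨_, hφ x⟩) h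
  have hc : c = m := φ.injective.comp RingOfIntegers.coe_injective (by simpa using hm)
  have hlo : -2 ≤ m := by nlinarith
  have hhi : m ≤ 2 := by nlinarith
  interval_cases m <;> simp [hc]
end

section
/- Let c be an algebraic integer in an imaginary quadratic field with Re(c) ≥ 0, c ≠ 0, ±2. Then |c/(c+2)| ≤ 1, and if additionally c ∉ S_c (in particular |c| ≥ √2 and c ≠ 1, 2), then |c/(c−2)| ≤ 5. -/
open NumberField Complex

/-- The exceptional set `S_c` of the paper, viewed inside `ℂ`. -/
def Sc : Set ℂ :=
  {1, -1, I, -I,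
   1 + I, 1 - I, -1 + I, -1 - I,
   2 + I, 2 - I, -2 + I, -2 - I,
   1 + (Real.sqrt 2 : ℂ) * I, 1 - (Real.sqrt 2 : ℂ) * I,
   -1 + (Real.sqrt 2 : ℂ) * I, -1 - (Real.sqrt 2 : ℂ) * I,
   1 + (Real.sqrt 3 : ℂ) * I, 1 - (Real.sqrt 3 : ℂ) * I,
   -1 + (Real.sqrt 3 : ℂ) * I, -1 - (Real.sqrt 3 : ℂ) * I,
   (1 + (Real.sqrt 3 : ℂ) * I) / 2, (1 - (Real.sqrt 3 : ℂ) * I) / 2,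
   (-1 + (Real.sqrt 3 : ℂ) * I) / 2, (-1 - (Real.sqrt 3 : ℂ) * I) / 2,
   (3 + (Real.sqrt 3 : ℂ) * I) / 2, (3 - (Real.sqrt 3 : ℂ) * I) / 2,
   (-3 + (Real.sqrt 3 : ℂ) * I) / 2, (-3 - (Real.sqrt 3 : ℂ) * I) / 2}

/-!
Write `z = f c`. The trace `t` and norm `n` of `c` are the integers `2 Re z` and `|z|²`, so
`0 ≤ t` and `t² ≤ 4n`. The first bound is `|z + 2|² - |z|² = 4 Re z + 4 > 0`. The second,
`|z|² ≤ 25 |z - 2|²`, reads `50 t ≤ 24 n + 100`: for `t ≥ 5` this follows from `6 t² ≤ 24 n`,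
and for `t ≤ 4` by inspection, the only failure being `(t, n) = (4, 4)`, that is `z = 2`.
-/

open ComplexConjugate

theorem Int.fifty_mul_le_of_sq_le_four_mul {t n : ℤ} (ht : 0 ≤ t) (htn : t ^ 2 ≤ 4 * n)
    (h44 : (t, n) ≠ (4, 4)) : 50 * t ≤ 24 * n + 100 := by
  rcases lt_or_ge t 5 with h5 | h5
  · interval_cases t <;> simp_all <;> omega
  · nlinarith

namespace Complex

theorem norm_le_norm_add_ofReal {z : ℂ} {a : ℝ} (hz : 0 ≤ z.re) (ha : 0 ≤ a) :
    ‖z‖ ≤ ‖z + a‖ := by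
  rw [← sq_le_sq₀ (norm_nonneg _) (norm_nonneg _), Complex.sq_norm, Complex.sq_norm,
    normSq_apply, normSq_apply]
  simp only [add_re, ofReal_re, add_im, ofReal_im, add_zero]
  nlinarith

theorem norm_div_add_two_le_one {z : ℂ} (hz : 0 ≤ z.re) : ‖z / (z + 2)‖ ≤ 1 := by
  rw [norm_div]
  exact div_le_one_of_le₀ (by exact_mod_cast norm_le_norm_add_ofReal hz zero_le_two)
    (norm_nonneg _)

theorem norm_div_sub_two_le_five {z : ℂ} {t n : ℤ} (hz : 0 ≤ z.re) (ht : (t : ℝ) = 2 * z.re)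
    (hn : (n : ℝ) = normSq z) : ‖z / (z - 2)‖ ≤ 5 := by
  rcases eq_or_ne z 2 with rfl | hz2
  · simp -- `2 / 0 = 0`
  rw [normSq_apply] at hn
  have h44 : (t, n) ≠ (4, 4) := by
    rintro ⟨⟨⟩⟩
    have hre : z.re = 2 := by push_cast at ht; linarith
    have him : z.im = 0 := by push_cast at hn; nlinarith
    exact hz2 (Complex.ext (by simpa using hre) (by simpa using him))
  have ht0 : (0 : ℝ) ≤ t := by rw [ht]; positivity
  have htn : (t : ℝ) ^ 2 ≤ 4 * n := by rw [ht, hn]; nlinarith [sq_nonneg z.im]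
  have key : (50 * t : ℝ) ≤ 24 * n + 100 := by
    exact_mod_cast Int.fifty_mul_le_of_sq_le_four_mul (by exact_mod_cast ht0)
      (by exact_mod_cast htn) h44
  rw [norm_div]
  refine div_le_of_le_mul₀ (norm_nonneg _) (by norm_num) ?_
  rw [← sq_le_sq₀ (norm_nonneg _) (by positivity), mul_pow, Complex.sq_norm, Complex.sq_norm,
    normSq_apply, normSq_apply]
  simp only [sub_re, sub_im, re_ofNat, im_ofNat, sub_zero]
  nlinarith

end Complex

namespace NumberField.ComplexEmbedding

variable {K : Type*} [Field K] [NumberField K] {f : K →+* ℂ}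

theorem toRatAlgHom_ne_conjugate (hf : ¬ IsReal f) :
    f.toRatAlgHom ≠ (conjugate f).toRatAlgHom := fun h =>
  hf (isReal_iff.mpr (RingHom.ext fun x => (AlgHom.congr_fun h x).symm))

open Classical in
theorem univ_ratAlgHom_eq_pair (hdeg : Module.finrank ℚ K = 2) (hf : ¬ IsReal f) :
    (Finset.univ : Finset (K →ₐ[ℚ] ℂ)) = {f.toRatAlgHom, (conjugate f).toRatAlgHom} := by
  refine (Finset.eq_univ_of_card _ ?_).symm
  rw [Finset.card_pair (toRatAlgHom_ne_conjugate hf), AlgHom.card, hdeg]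

theorem algebraMap_trace_eq_add_conj (hdeg : Module.finrank ℚ K = 2) (hf : ¬ IsReal f) (x : K) :
    algebraMap ℚ ℂ (Algebra.trace ℚ K x) = f x + conj (f x) := by
  classical
  rw [trace_eq_sum_embeddings, univ_ratAlgHom_eq_pair hdeg hf,
    Finset.sum_pair (toRatAlgHom_ne_conjugate hf)]
  rfl

theorem algebraMap_norm_eq_mul_conj (hdeg : Module.finrank ℚ K = 2) (hf : ¬ IsReal f) (x : K) :
    algebraMap ℚ ℂ (Algebra.norm ℚ x) = f x * conj (f x) := by
  classical
  rw [Algebra.norm_eq_prod_embeddings, univ_ratAlgHom_eq_pair hdeg hf,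
    Finset.prod_pair (toRatAlgHom_ne_conjugate hf)]
  rfl

theorem trace_int_eq_two_mul_re (hdeg : Module.finrank ℚ K = 2) (hf : ¬ IsReal f) (x : 𝓞 K) :
    (Algebra.trace ℤ (𝓞 K) x : ℝ) = 2 * (f x).re := by
  have := algebraMap_trace_eq_add_conj hdeg hf (x : K)
  rw [← Algebra.coe_trace_int, eq_ratCast, add_conj] at this
  exact_mod_cast this

theorem norm_int_eq_normSq (hdeg : Module.finrank ℚ K = 2) (hf : ¬ IsReal f) (x : 𝓞 K) :
    (Algebra.norm ℤ x : ℝ) = normSq (f x) := by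
  have := algebraMap_norm_eq_mul_conj hdeg hf (x : K)
  rw [← Algebra.coe_norm_int, eq_ratCast, mul_conj] at this
  exact_mod_cast this

end NumberField.ComplexEmbedding

open ComplexEmbedding in
theorem stmt_15_general (K : Type*) [Field K] [NumberField K]
    (hdeg : Module.finrank ℚ K = 2) (himag : IsEmpty (K →+* ℝ))
    (f : K →+* ℂ) (c : 𝓞 K)
    (hre : 0 ≤ (f (c : K)).re) :
    ‖f (c : K) / (f (c : K) + 2)‖ ≤ 1 ∧
      (f (c : K) ∉ Sc → ‖f (c : K) / (f (c : K) - 2)‖ ≤ 5) := by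
  have hf : ¬ IsReal f := fun h => himag.elim h.embedding
  exact ⟨Complex.norm_div_add_two_le_one hre, fun _ => Complex.norm_div_sub_two_le_five hre
    (trace_int_eq_two_mul_re hdeg hf c) (norm_int_eq_normSq hdeg hf c)⟩

/-- For an algebraic integer `c` of an imaginary quadratic field with `Re(c) ≥ 0` and
`c ∉ {0, ±2}`, one has `|c/(c+2)| ≤ 1`; and if moreover `c ∉ S_c`, then `|c/(c−2)| ≤ 5`. -/
theorem stmt_15 (K : Type*) [Field K] [NumberField K]
    (hdeg : Module.finrank ℚ K = 2) (himag : IsEmpty (K →+* ℝ))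
    (f : K →+* ℂ) (c : 𝓞 K)
    (hre : 0 ≤ (f (c : K)).re) (hc0 : c ≠ 0) (hc2 : c ≠ 2) (hc2' : c ≠ -2) :
    ‖f (c : K) / (f (c : K) + 2)‖ ≤ 1 ∧
      (f (c : K) ∉ Sc → ‖f (c : K) / (f (c : K) - 2)‖ ≤ 5) :=
  stmt_15_general K hdeg himag f c hre
end
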